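/- arXiv:1511.00785 — 2 statements merged into one kernel-verified Lean document; each statement's English description precedes it below -/
import Mathlib

section
/- In the majority-group game G' constructed from G, if x is an ε-ANE of G' and for some group i and action ℓ there is an action k with u_i(k, x̄_{-i}) − u_i(ℓ, x̄_{-i}) ≥ 2αε, then every player (i,j) in group i assigns probability at most 1/(2α) to action ℓ, and consequently the majority-action distribution satisfies x̄_{i,ℓ} ≤ exp(−s/(2α²)). -/
/-!
Since the members of a group play independently, a member of group `i` who plays `m` receives
`u i (m, x̄₋ᵢ)` in expectation: its own action replaces its group's majority, and the other
groups' majorities are distributed as `x̄`. Its expected payoff is therefore the `x_{(i,j)}`-mixture of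
these pure payoffs, and the ε-ANE condition bounds the total weight-times-loss by `ε`; a loss of
`2αε` on `ℓ` forces `x_{(i,j),ℓ} ≤ 1/(2α)`. The majority of group `i` can be `ℓ` only if at least
`s/α` members play `ℓ`, and a Chernoff bound with parameter `2/α` makes this event have
probability at most `exp(-s/(2α²))`.
-/

open Finset

def IsDist (α : ℕ) (p : Fin α → ℝ) : Prop := (∀ k, 0 ≤ p k) ∧ ∑ k, p k = 1

noncomputable def expPay {I : Type*} [Fintype I] [DecidableEq I] {α : ℕ}
    (u : (I → Fin α) → ℝ) (x : I → Fin α → ℝ) : ℝ :=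
  ∑ a : I → Fin α, (∏ j, x j (a j)) * u a

noncomputable def purePay {I : Type*} [Fintype I] [DecidableEq I] {α : ℕ}
    (u : (I → Fin α) → ℝ) (x : I → Fin α → ℝ) (i : I) (k : Fin α) : ℝ :=
  expPay u (Function.update x i (fun b => if b = k then (1:ℝ) else 0))

def IsANE {I : Type*} [Fintype I] [DecidableEq I] {α : ℕ}
    (u : I → (I → Fin α) → ℝ) (x : I → Fin α → ℝ) (ε : ℝ) : Prop :=
  ∀ i k, purePay (u i) x i k - ε ≤ expPay (u i) x

def IsWSNE {I : Type*} [Fintype I] [DecidableEq I] {α : ℕ}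
    (u : I → (I → Fin α) → ℝ) (x : I → Fin α → ℝ) (ε : ℝ) : Prop :=
  ∀ i k, 0 < x i k → ∀ k', purePay (u i) x i k' - ε ≤ purePay (u i) x i k

noncomputable def tvDist {α : ℕ} (p q : Fin α → ℝ) : ℝ := (1/2) * ∑ k, |p k - q k|

def actCount {s α : ℕ} (g : Fin s → Fin α) (k : Fin α) : ℕ :=
  (Finset.univ.filter fun j => g j = k).card

noncomputable def maj {s α : ℕ} [NeZero α] (g : Fin s → Fin α) : Fin α :=
  (Finset.univ.filter fun k : Fin α => ∀ k', actCount g k' ≤ actCount g k).min' (by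
    obtain ⟨k, -, hk⟩ := Finset.exists_max_image Finset.univ (actCount g) ⟨default, mem_univ _⟩
    exact ⟨k, mem_filter.mpr ⟨mem_univ k, fun k' => hk k' (mem_univ k')⟩⟩)

noncomputable def groupPayoff {n s α : ℕ} [NeZero α]
    (u : Fin n → (Fin n → Fin α) → ℝ) (i : Fin n) (j : Fin s)
    (a : Fin n × Fin s → Fin α) : ℝ :=
  u i (Function.update (fun i' => maj fun j' => a (i', j')) i (a (i, j)))

noncomputable def majDist {n s α : ℕ} [NeZero α]
    (x : Fin n × Fin s → Fin α → ℝ) (i : Fin n) (k : Fin α) : ℝ :=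
  ∑ g : Fin s → Fin α, (∏ j, x (i, j) (g j)) * (if maj g = k then 1 else 0)

lemma expPay_eq_sum_mul_purePay {I : Type*} [Fintype I] [DecidableEq I] {α : ℕ}
    (v : (I → Fin α) → ℝ) (x : I → Fin α → ℝ) (i : I) :
    expPay v x = ∑ m, x i m * purePay v x i m := by
  have hprod : ∀ (m : Fin α) (a : I → Fin α),
      ∏ p, Function.update x i (fun b => if b = m then (1:ℝ) else 0) p (a p)
        = (if a i = m then 1 else 0) * ∏ p ∈ univ \ {i}, x p (a p) := by
    intro m a
    have : (fun p => Function.update x i (fun b => if b = m then (1:ℝ) else 0) p (a p))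
        = Function.update (fun p => x p (a p)) i (if a i = m then 1 else 0) := by
      ext p
      rcases eq_or_ne p i with rfl | hp <;> simp [*]
    rw [this, prod_update_of_mem (mem_univ i)]
  simp only [expPay, purePay, hprod, mul_sum]
  rw [sum_comm]
  refine sum_congr rfl fun a _ => ?_
  rw [Fintype.sum_eq_single (a i) fun m hm => by simp [Ne.symm hm],
    prod_eq_mul_prod_sdiff_singleton i _ (by simp)]
  simp only [if_true]
  ring

lemma IsANE.mul_purePay_sub_le {I : Type*} [Fintype I] [DecidableEq I] {α : ℕ}
    {u : I → (I → Fin α) → ℝ} {x : I → Fin α → ℝ} {ε : ℝ} (hane : IsANE u x ε)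
    {i : I} (hx : IsDist α (x i)) (k ℓ : Fin α) :
    x i ℓ * (purePay (u i) x i k - purePay (u i) x i ℓ) ≤ ε := by
  have hslack : ∑ m, x i m * (expPay (u i) x + ε - purePay (u i) x i m) = ε := by
    simp only [mul_sub, mul_add, sum_sub_distrib, sum_add_distrib, ← sum_mul, hx.2,
      ← expPay_eq_sum_mul_purePay]
    ring
  calc x i ℓ * (purePay (u i) x i k - purePay (u i) x i ℓ)
      ≤ x i ℓ * (expPay (u i) x + ε - purePay (u i) x i ℓ) :=
        mul_le_mul_of_nonneg_left (by linarith [hane i k]) (hx.1 ℓ)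
    _ ≤ ∑ m, x i m * (expPay (u i) x + ε - purePay (u i) x i m) :=
        single_le_sum (f := fun m => x i m * (expPay (u i) x + ε - purePay (u i) x i m))
          (fun m _ => mul_nonneg (hx.1 m) (by linarith [hane i m])) (mem_univ ℓ)
    _ = ε := hslack

lemma sum_prod_mul_comp_eq_sum_prod_fiber {ι β γ : Type*} [Fintype ι] [DecidableEq ι]
    [Fintype β] [Fintype γ] [DecidableEq γ]
    (W : ι → β → ℝ) (σ : ι → β → γ) (F : (ι → γ) → ℝ) :
    ∑ h : ι → β, (∏ i, W i (h i)) * F (fun i => σ i (h i))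
      = ∑ c : ι → γ, (∏ i, ∑ g, if σ i g = c i then W i g else 0) * F c := by
  rw [← sum_fiberwise univ (fun h i => σ i (h i))]
  refine sum_congr rfl fun c _ => ?_
  have hfiber : univ.filter (fun h : ι → β => (fun i => σ i (h i)) = c)
      = Fintype.piFinset fun i => univ.filter fun g => σ i g = c i := by
    ext h
    simp [Fintype.mem_piFinset, funext_iff]
  rw [sum_congr rfl fun h hh => by rw [(mem_filter.mp hh).2], ← sum_mul, hfiber,
    ← prod_univ_sum]
  simp only [sum_filter]

noncomputable def blockDist {ι κ : Type*} [Fintype κ] [DecidableEq κ] {α : ℕ}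
    (x : ι × κ → Fin α → ℝ) (σ : ι → (κ → Fin α) → Fin α) (i : ι) (c : Fin α) : ℝ :=
  ∑ g : κ → Fin α, if σ i g = c then ∏ j, x (i, j) (g j) else 0

lemma expPay_comp_block {ι κ : Type*} [Fintype ι] [DecidableEq ι] [Fintype κ] [DecidableEq κ]
    {α : ℕ} (x : ι × κ → Fin α → ℝ) (σ : ι → (κ → Fin α) → Fin α) (F : (ι → Fin α) → ℝ) :
    expPay (fun a => F fun i => σ i fun j => a (i, j)) x = expPay F (blockDist x σ) := by
  have hcurry : ∀ a : ι × κ → Fin α,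
      (∏ p, x p (a p)) * F (fun i => σ i fun j => a (i, j))
        = (∏ i, ∏ j, x (i, j) (Equiv.curry _ _ _ a i j))
            * F (fun i => σ i (Equiv.curry _ _ _ a i)) := fun a => by
    rw [Fintype.prod_prod_type]
    rfl
  rw [expPay, Fintype.sum_equiv (Equiv.curry ι κ (Fin α)) _
    (fun h => (∏ i, ∏ j, x (i, j) (h i j)) * F (fun i => σ i (h i))) hcurry]
  rw [sum_prod_mul_comp_eq_sum_prod_fiber (fun i g => ∏ j, x (i, j) (g j)) σ F, expPay]
  rfl

lemma sum_ite_apply_eq_prod {κ β : Type*} [Fintype κ] [DecidableEq κ] [Fintype β]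
    [DecidableEq β] (z : κ → β → ℝ) {j : κ} (hz : ∀ j' ≠ j, ∑ w, z j' w = 1) (v : β) :
    ∑ g : κ → β, (if g j = v then ∏ j', z j' (g j') else 0) = z j v := by
  have hfilter : univ.filter (fun g : κ → β => g j = v)
      = Fintype.piFinset fun j' => if j' = j then {v} else univ := by
    ext g
    simp only [mem_filter, mem_univ, true_and, Fintype.mem_piFinset]
    refine ⟨fun hg j' => ?_, fun hg => by simpa using hg j⟩
    split_ifs with h
    · simp [h, hg]
    · exact mem_univ _
  rw [← sum_filter, hfilter, ← prod_univ_sum, ← mul_prod_erase univ _ (mem_univ j),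
    prod_eq_one fun j' hj' => by rw [if_neg (ne_of_mem_erase hj'), hz _ (ne_of_mem_erase hj')]]
  simp

lemma purePay_groupPayoff {n s α : ℕ} [NeZero α] (u : Fin n → (Fin n → Fin α) → ℝ)
    (x : Fin n × Fin s → Fin α → ℝ) (hx : ∀ ij, IsDist α (x ij)) (i : Fin n) (j : Fin s)
    (m : Fin α) :
    purePay (groupPayoff u i j) x (i, j) m = purePay (u i) (majDist x) i m := by
  set δ : Fin α → ℝ := fun b => if b = m then 1 else 0
  let σ : Fin n → (Fin s → Fin α) → Fin α := fun i' g => if i' = i then g j else maj g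
  have hpayoff : groupPayoff u i j = fun a => u i fun i' => σ i' fun j' => a (i', j') := by
    ext a
    simp only [groupPayoff, σ]
    congr 1
    ext i'
    rcases eq_or_ne i' i with rfl | hi' <;> simp [*]
  have hblock : blockDist (Function.update x (i, j) δ) σ = Function.update (majDist x) i δ := by
    ext i' c
    rcases eq_or_ne i' i with rfl | hi'
    · simp only [blockDist, σ, if_true, Function.update_self]
      refine (sum_ite_apply_eq_prod (fun j' => Function.update x (i', j) δ (i', j'))
        (fun j' hj' => ?_) c).trans ?_
      · rw [Function.update_of_ne (by simp [hj'])]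
        exact (hx _).2
      · simp
    · simp [blockDist, σ, majDist, hi']
  rw [purePay, hpayoff, expPay_comp_block, hblock, purePay]

lemma actCount_le_actCount_maj {s α : ℕ} [NeZero α] (g : Fin s → Fin α) (k : Fin α) :
    actCount g k ≤ actCount g (maj g) := by
  have hmem := min'_mem (univ.filter fun k : Fin α => ∀ k', actCount g k' ≤ actCount g k)
  exact (mem_filter.mp (hmem _)).2 k

lemma le_mul_actCount_maj {s α : ℕ} [NeZero α] (g : Fin s → Fin α) :
    s ≤ α * actCount g (maj g) :=
  calc s = ∑ k, actCount g k := by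
        simpa [actCount] using card_eq_sum_card_fiberwise (f := g) (s := univ) (t := univ)
          fun j _ => mem_univ (g j)
    _ ≤ ∑ _k : Fin α, actCount g (maj g) := sum_le_sum fun k _ => actCount_le_actCount_maj g k
    _ = α * actCount g (maj g) := by simp

lemma sum_prod_mul_exp_actCount {s α : ℕ} (z : Fin s → Fin α → ℝ) (hz : ∀ j, ∑ w, z j w = 1)
    (ℓ : Fin α) (t : ℝ) :
    ∑ g : Fin s → Fin α, (∏ j, z j (g j)) * Real.exp (t * actCount g ℓ)
      = ∏ j, (1 - z j ℓ + z j ℓ * Real.exp t) := by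
  have hexp : ∀ g : Fin s → Fin α,
      Real.exp (t * actCount g ℓ) = ∏ j, if g j = ℓ then Real.exp t else 1 := by
    intro g
    rw [← prod_filter, prod_const, ← Real.exp_nat_mul, mul_comm, actCount]
  have hfactor : ∀ j, ∑ w, z j w * (if w = ℓ then Real.exp t else 1)
      = 1 - z j ℓ + z j ℓ * Real.exp t := by
    intro j
    rw [← add_sum_erase _ _ (mem_univ ℓ), if_pos rfl,
      sum_congr rfl (g := z j) fun w hw => by rw [if_neg (ne_of_mem_erase hw), mul_one],
      sum_erase_eq_sub (mem_univ ℓ), hz j]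
    ring
  simp only [hexp, ← prod_mul_distrib, ← hfactor, Fintype.prod_sum]

lemma majDist_le_exp_mul_sum {n s α : ℕ} [NeZero α] (x : Fin n × Fin s → Fin α → ℝ)
    (hx : ∀ ij, IsDist α (x ij)) (i : Fin n) (ℓ : Fin α) {t : ℝ} (ht : 0 ≤ t) :
    majDist x i ℓ ≤ Real.exp (-(t * s / α)) *
      ∑ g : Fin s → Fin α, (∏ j, x (i, j) (g j)) * Real.exp (t * actCount g ℓ) := by
  rw [majDist, mul_sum]
  refine sum_le_sum fun g _ => ?_
  rw [mul_left_comm, ← Real.exp_add]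
  refine mul_le_mul_of_nonneg_left ?_ (prod_nonneg fun j _ => (hx (i, j)).1 (g j))
  split_ifs with hg
  · have hcount : (s : ℝ) ≤ α * actCount g ℓ := by
      exact_mod_cast hg ▸ le_mul_actCount_maj g
    have hα : (0 : ℝ) < α := by exact_mod_cast Nat.pos_of_neZero α
    refine Real.one_le_exp ?_
    rw [neg_add_eq_sub, sub_nonneg, div_le_iff₀ hα]
    nlinarith
  · exact (Real.exp_pos _).le

lemma bernoulli_mgf_le {A p : ℝ} (hA : 2 ≤ A) (hp : p ≤ 1 / (2 * A)) :
    1 - p + p * Real.exp (2 / A) ≤ Real.exp (3 / (2 * A ^ 2)) := by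
  set y := 1 / A with hy
  have hy0 : 0 < y := by positivity
  have hy2 : y ≤ 1 / 2 := by rw [hy]; gcongr
  have h2y : 2 / A = 2 * y := by rw [hy]; ring
  have h32 : 3 / (2 * A ^ 2) = 3 / 2 * y ^ 2 := by rw [hy]; ring
  have hpy : p ≤ y / 2 := by rw [hy]; convert hp using 1; ring
  rw [h2y, h32]
  -- `p (e^{2y} - 1) ≤ (y/2) (2y + 2y² + 16y³/9) ≤ 3y²/2 + 9y⁴/8 ≤ e^{3y²/2} - 1` for `y ≤ 1/2`
  have hupper : Real.exp (2 * y) ≤ 1 + 2 * y + 2 * y ^ 2 + 16 / 9 * y ^ 3 := by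
    have h := Real.exp_bound' (x := 2 * y) (by positivity) (by linarith) (n := 3) (by norm_num)
    norm_num [sum_range_succ, Nat.factorial] at h
    linarith
  have hlower := Real.quadratic_le_exp_of_nonneg (x := 3 / 2 * y ^ 2) (by positivity)
  have hexp1 : 1 ≤ Real.exp (2 * y) := Real.one_le_exp (by positivity)
  nlinarith [mul_le_mul_of_nonneg_right hpy (sub_nonneg.mpr hexp1)]

lemma majDist_le_exp {n s α : ℕ} [NeZero α] (hα : 2 ≤ α) (x : Fin n × Fin s → Fin α → ℝ)
    (hx : ∀ ij, IsDist α (x ij)) (i : Fin n) (ℓ : Fin α) (hp : ∀ j, x (i, j) ℓ ≤ 1 / (2 * α)) :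
    majDist x i ℓ ≤ Real.exp (-(s : ℝ) / (2 * α ^ 2)) := by
  have hA : (2 : ℝ) ≤ α := by exact_mod_cast hα
  calc majDist x i ℓ
      ≤ Real.exp (-(2 / α * s / α)) *
          ∏ j, (1 - x (i, j) ℓ + x (i, j) ℓ * Real.exp (2 / α)) := by
        rw [← sum_prod_mul_exp_actCount _ (fun j => (hx (i, j)).2)]
        exact majDist_le_exp_mul_sum x hx i ℓ (by positivity)
    _ ≤ Real.exp (-(2 / α * s / α)) * ∏ _j : Fin s, Real.exp (3 / (2 * α ^ 2)) := by
        refine mul_le_mul_of_nonneg_left (prod_le_prod (fun j _ => ?_) fun j _ => ?_)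
          (Real.exp_pos _).le
        · have h0 := (hx (i, j)).1 ℓ
          have h1 := Real.one_le_exp (x := 2 / α) (by positivity)
          nlinarith
        · exact bernoulli_mgf_le hA (hp j)
    _ = Real.exp (-(s : ℝ) / (2 * α ^ 2)) := by
        rw [prod_const, card_univ, Fintype.card_fin, ← Real.exp_nat_mul, ← Real.exp_add]
        congr 1
        field_simp
        ring

theorem group_gap_bounds_general {n s α : ℕ} [NeZero α]
    (ε : ℝ) (hε : 0 < ε)
    (u : Fin n → (Fin n → Fin α) → ℝ)
    (x : Fin n × Fin s → Fin α → ℝ) (hx : ∀ ij, IsDist α (x ij))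
    (hane : IsANE (fun ij : Fin n × Fin s => groupPayoff u ij.1 ij.2) x ε)
    (i : Fin n) (ℓ k : Fin α)
    (hgap : 2 * α * ε ≤ purePay (u i) (majDist x) i k - purePay (u i) (majDist x) i ℓ) :
    (∀ j : Fin s, x (i, j) ℓ ≤ 1 / (2 * α)) ∧
      majDist x i ℓ ≤ Real.exp (-(s : ℝ) / (2 * α ^ 2)) := by
  have hαε : 0 < 2 * (α : ℝ) * ε := by
    have : (0 : ℝ) < α := by exact_mod_cast Nat.pos_of_neZero α
    positivity
  have hkℓ : k ≠ ℓ := by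
    rintro rfl
    linarith
  have hα : 2 ≤ α := Fin.nontrivial_iff_two_le.mp ⟨k, ℓ, hkℓ⟩
  have hweight : ∀ j, x (i, j) ℓ ≤ 1 / (2 * α) := by
    intro j
    have h := hane.mul_purePay_sub_le (hx (i, j)) k ℓ
    simp only [purePay_groupPayoff u x hx] at h
    have hloss : x (i, j) ℓ * (2 * α * ε) ≤ ε :=
      (mul_le_mul_of_nonneg_left hgap ((hx (i, j)).1 ℓ)).trans h
    rw [le_div_iff₀ (by positivity)]
    nlinarith
  exact ⟨hweight, majDist_le_exp hα x hx i ℓ hweight⟩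

theorem group_gap_bounds {n s α : ℕ} (hα : 0 < α) (hs : 0 < s) [NeZero α]
    (ε : ℝ) (hε : 0 < ε)
    (u : Fin n → (Fin n → Fin α) → ℝ)
    (hu : ∀ i a, u i a ∈ Set.Icc (0:ℝ) 1)
    (x : Fin n × Fin s → Fin α → ℝ) (hx : ∀ ij, IsDist α (x ij))
    (hane : IsANE (fun ij : Fin n × Fin s => groupPayoff u ij.1 ij.2) x ε)
    (i : Fin n) (ℓ k : Fin α)
    (hgap : 2 * α * ε ≤ purePay (u i) (majDist x) i k - purePay (u i) (majDist x) i ℓ) :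
    (∀ j : Fin s, x (i, j) ℓ ≤ 1 / (2 * α)) ∧
      majDist x i ℓ ≤ Real.exp (-(s : ℝ) / (2 * α ^ 2)) :=
  group_gap_bounds_general ε hε u x hx hane i ℓ k hgap
end

section
/- Let x̄_i and y_i (i ∈ [n]) be distributions on [α] such that y_i is the ε/n-truncation-and-rescaling of x̄_i. If for some player i and actions ℓ, k we have y_{i,ℓ} > 0 and u_i(k, y_{-i}) > u_i(ℓ, y_{-i}) + 4αε, then u_i(k, x̄_{-i}) > u_i(ℓ, x̄_{-i}) + 2αε. -/
open Finset

/-!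
A payoff with values in `[0, 1]` is affine in each player's mixed strategy, so changing one
player's strategy moves it by at most the total variation distance of the change; a hybrid
argument over the players turns this into a bound by the sum of the distances. Cutting off
mass `S ≤ αε/n` from a distribution and rescaling moves it by at most `S` in total variation,
so both `u_i(k, ·)` and `u_i(ℓ, ·)` move by at most `αε`, and the gap `4αε` keeps `2αε`.
-/

lemma IsDist.update {I : Type*} [DecidableEq I] {α : ℕ} {z : I → Fin α → ℝ}
    (hz : ∀ i, IsDist α (z i)) (j : I) {p : Fin α → ℝ} (hp : IsDist α p) (i : I) :
    IsDist α (Function.update z j p i) := by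
  rcases eq_or_ne i j with rfl | hij
  · rwa [Function.update_self]
  · rw [Function.update_of_ne hij]; exact hz i

section Payoffs

variable {I : Type*} [Fintype I] [DecidableEq I] {α : ℕ}

lemma isDist_pure (k : Fin α) : IsDist α (fun b => if b = k then (1 : ℝ) else 0) :=
  ⟨fun b => by dsimp only; split_ifs <;> norm_num, by simp⟩

lemma prod_update_apply (z : I → Fin α → ℝ) (j : I) (f : Fin α → ℝ) (a : I → Fin α) :
    ∏ i, Function.update z j f i (a i) = f (a j) * ∏ i ∈ univ.erase j, z i (a i) := by
  rw [← mul_prod_erase univ _ (mem_univ j), Function.update_self]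
  congr 1
  exact prod_congr rfl fun i hi => by rw [Function.update_of_ne (ne_of_mem_erase hi)]

lemma expPay_update (u : (I → Fin α) → ℝ) (z : I → Fin α → ℝ) (j : I) (p : Fin α → ℝ) :
    expPay u (Function.update z j p) = ∑ k, p k * purePay u z j k := by
  simp only [purePay, expPay, prod_update_apply, mul_sum]
  rw [sum_comm]
  refine sum_congr rfl fun a _ => ?_
  simp [← mul_assoc, mul_ite]

lemma expPay_mem_Icc (u : (I → Fin α) → ℝ) (hu : ∀ a, u a ∈ Set.Icc (0 : ℝ) 1)
    (z : I → Fin α → ℝ) (hz : ∀ i, IsDist α (z i)) : expPay u z ∈ Set.Icc (0 : ℝ) 1 := by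
  have hweight : ∀ a : I → Fin α, 0 ≤ ∏ i, z i (a i) :=
    fun a => prod_nonneg fun i _ => (hz i).1 _
  have htotal : ∑ a : I → Fin α, ∏ i, z i (a i) = 1 := by
    rw [← Fintype.prod_sum]
    exact prod_eq_one fun i _ => (hz i).2
  refine ⟨sum_nonneg fun a _ => mul_nonneg (hweight a) (hu a).1, ?_⟩
  calc expPay u z ≤ ∑ a : I → Fin α, ∏ i, z i (a i) :=
        sum_le_sum fun a _ => mul_le_of_le_one_right (hweight a) (hu a).2
    _ = 1 := htotal

lemma purePay_mem_Icc (u : (I → Fin α) → ℝ) (hu : ∀ a, u a ∈ Set.Icc (0 : ℝ) 1)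
    (z : I → Fin α → ℝ) (hz : ∀ i, IsDist α (z i)) (j : I) (k : Fin α) :
    purePay u z j k ∈ Set.Icc (0 : ℝ) 1 :=
  expPay_mem_Icc u hu _ (IsDist.update hz j (isDist_pure k))

end Payoffs

lemma abs_sum_sub_mul_le_tvDist {α : ℕ} (p q v : Fin α → ℝ) (hpq : ∑ k, p k = ∑ k, q k)
    (hv : ∀ k, v k ∈ Set.Icc (0 : ℝ) 1) : |∑ k, (p k - q k) * v k| ≤ tvDist p q := by
  -- Since `p - q` has total mass zero, `v` may be centred at `1/2`.
  have hcentre : ∑ k, (p k - q k) * v k = ∑ k, (p k - q k) * (v k - 1 / 2) := by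
    simp only [mul_sub, sum_sub_distrib, ← sum_mul, hpq, sub_self, zero_mul, sub_zero]
  rw [hcentre, tvDist, mul_sum]
  refine (abs_sum_le_sum_abs _ _).trans (sum_le_sum fun k _ => ?_)
  rw [abs_mul, mul_comm]
  have : |v k - 1 / 2| ≤ 1 / 2 := abs_le.mpr ⟨by linarith [(hv k).1], by linarith [(hv k).2]⟩
  exact mul_le_mul_of_nonneg_right this (abs_nonneg _)

lemma tvDist_nonneg {α : ℕ} (p q : Fin α → ℝ) : 0 ≤ tvDist p q := by
  unfold tvDist; positivity

section Hybrid

variable {I : Type*} [Fintype I] [DecidableEq I] {α : ℕ} (u : (I → Fin α) → ℝ)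
  (hu : ∀ a, u a ∈ Set.Icc (0 : ℝ) 1)

include hu in
lemma abs_expPay_update_sub_le_tvDist (z : I → Fin α → ℝ) (hz : ∀ i, IsDist α (z i)) (j : I)
    {p q : Fin α → ℝ} (hp : IsDist α p) (hq : IsDist α q) :
    |expPay u (Function.update z j p) - expPay u (Function.update z j q)| ≤ tvDist p q := by
  rw [expPay_update, expPay_update, ← sum_sub_distrib]
  simp only [← sub_mul]
  exact abs_sum_sub_mul_le_tvDist p q _ (hp.2.trans hq.2.symm) (purePay_mem_Icc u hu z hz j)

include hu in
lemma abs_expPay_sub_le_sum_tvDist {x y : I → Fin α → ℝ} (hx : ∀ i, IsDist α (x i))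
    (hy : ∀ i, IsDist α (y i)) : |expPay u y - expPay u x| ≤ ∑ i, tvDist (y i) (x i) := by
  suffices h : ∀ s : Finset I,
      |expPay u (s.piecewise y x) - expPay u x| ≤ ∑ i ∈ s, tvDist (y i) (x i) by
    simpa using h univ
  intro s
  induction s using Finset.induction_on with
  | empty => simp
  | insert a s ha ih =>
    have hz : ∀ i, IsDist α (s.piecewise y x i) := fun i => by
      by_cases hi : i ∈ s
      · rw [piecewise_eq_of_mem s y x hi]; exact hy i
      · rw [piecewise_eq_of_notMem s y x hi]; exact hx i
    set z := s.piecewise y x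
    have hza : Function.update z a (x a) = z := by
      rw [← piecewise_eq_of_notMem s y x ha, Function.update_eq_self]
    rw [piecewise_insert, sum_insert ha]
    calc |expPay u (Function.update z a (y a)) - expPay u x|
        ≤ |expPay u (Function.update z a (y a)) - expPay u (Function.update z a (x a))|
          + |expPay u z - expPay u x| := by rw [hza]; exact abs_sub_le _ _ _
      _ ≤ tvDist (y a) (x a) + ∑ i ∈ s, tvDist (y i) (x i) :=
        add_le_add (abs_expPay_update_sub_le_tvDist u hu z hz a (hy a) (hx a)) ih

include hu in
lemma abs_purePay_sub_le_sum_tvDist {x y : I → Fin α → ℝ} (hx : ∀ i, IsDist α (x i))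
    (hy : ∀ i, IsDist α (y i)) (j : I) (k : Fin α) :
    |purePay u y j k - purePay u x j k| ≤ ∑ i, tvDist (y i) (x i) := by
  refine (abs_expPay_sub_le_sum_tvDist u hu (IsDist.update hx j (isDist_pure k))
    (IsDist.update hy j (isDist_pure k))).trans (sum_le_sum fun i _ => ?_)
  rcases eq_or_ne i j with rfl | hij
  · simpa [tvDist] using tvDist_nonneg (y i) (x i)
  · rw [Function.update_of_ne hij, Function.update_of_ne hij]

end Hybrid

section Truncation

variable {α : ℕ} {p c : Fin α → ℝ}

lemma IsDist.rescale (hp : IsDist α p) (hcp : ∀ k, c k ≤ p k) (hmass : ∑ k, c k < 1) :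
    IsDist α (fun k => (p k - c k) / (1 - ∑ j, c j)) := by
  have hpos : 0 < 1 - ∑ j, c j := sub_pos.mpr hmass
  refine ⟨fun k => div_nonneg (sub_nonneg.mpr (hcp k)) hpos.le, ?_⟩
  rw [← sum_div, sum_sub_distrib, hp.2, div_self hpos.ne']

lemma tvDist_rescale_le (hp : IsDist α p) (hc : ∀ k, 0 ≤ c k) (hcp : ∀ k, c k ≤ p k)
    (hmass : ∑ k, c k < 1) : tvDist (fun k => (p k - c k) / (1 - ∑ j, c j)) p ≤ ∑ k, c k := by
  set S := ∑ k, c k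
  have hpos : 0 < 1 - S := sub_pos.mpr hmass
  have hS : 0 ≤ S := sum_nonneg fun k _ => hc k
  have hterm :
      ∀ k, |(p k - c k) / (1 - S) - p k| * (1 - S) ≤ S * (p k - c k) + (1 - S) * c k := by
    intro k
    calc |(p k - c k) / (1 - S) - p k| * (1 - S)
        = |((p k - c k) / (1 - S) - p k) * (1 - S)| := by rw [abs_mul, abs_of_pos hpos]
      _ = |S * (p k - c k) - (1 - S) * c k| := by
        rw [sub_mul, div_mul_cancel₀ _ hpos.ne']
        ring_nf
      _ ≤ S * (p k - c k) + (1 - S) * c k := by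
        rw [abs_le]
        constructor <;> nlinarith [hc k, hcp k]
  have htotal : ∑ k, (S * (p k - c k) + (1 - S) * c k) = 2 * S * (1 - S) := by
    rw [sum_add_distrib, ← mul_sum, ← mul_sum, sum_sub_distrib, hp.2]
    ring
  have hsum : (∑ k, |(p k - c k) / (1 - S) - p k|) * (1 - S) ≤ 2 * S * (1 - S) := by
    rw [sum_mul, ← htotal]
    exact sum_le_sum fun k _ => hterm k
  rw [tvDist]
  nlinarith [le_of_mul_le_mul_right hsum hpos]

end Truncation

lemma sum_truncate_le {α : ℕ} (p : Fin α → ℝ) {t : ℝ} (ht : 0 ≤ t) :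
    ∑ k, (if p k ≤ t then p k else 0) ≤ α * t := by
  calc ∑ k, (if p k ≤ t then p k else 0) ≤ ∑ _k : Fin α, t :=
        sum_le_sum fun k _ => by split_ifs with h; exacts [h, ht]
    _ = α * t := by simp

theorem truncated_gap_transfer_general {n α : ℕ} (hn : 0 < n)
    (ε : ℝ) (hε : 0 < ε) (hαεn : (α : ℝ) * ε / n < 1)
    (u : Fin n → (Fin n → Fin α) → ℝ)
    (hu : ∀ i a, u i a ∈ Set.Icc (0:ℝ) 1)
    (xbar : Fin n → Fin α → ℝ) (hxbar : ∀ i, IsDist α (xbar i))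
    (c : Fin n → Fin α → ℝ)
    (hc : ∀ i k, c i k = if xbar i k ≤ ε / n then xbar i k else 0)
    (y : Fin n → Fin α → ℝ)
    (hy : ∀ i k, y i k = (xbar i k - c i k) / (1 - ∑ j, c i j))
    (i : Fin n) (ℓ k : Fin α)
    (hgap : purePay (u i) y i ℓ + 4 * α * ε < purePay (u i) y i k) :
    purePay (u i) xbar i ℓ + 2 * α * ε < purePay (u i) xbar i k := by
  have hc_nonneg : ∀ j m, 0 ≤ c j m := fun j m => by
    rw [hc]; split_ifs; exacts [(hxbar j).1 m, le_rfl]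
  have hc_le : ∀ j m, c j m ≤ xbar j m := fun j m => by
    rw [hc]; split_ifs; exacts [le_rfl, (hxbar j).1 m]
  have hmass : ∀ j, ∑ m, c j m ≤ α * ε / n := fun j => by
    simpa only [← hc, mul_div_assoc] using sum_truncate_le (xbar j) (by positivity : 0 ≤ ε / n)
  have hmass_lt : ∀ j, ∑ m, c j m < 1 := fun j => (hmass j).trans_lt hαεn
  have hy_eq : ∀ j, y j = fun m => (xbar j m - c j m) / (1 - ∑ m', c j m') :=
    fun j => funext (hy j)
  have hy_dist : ∀ j, IsDist α (y j) := fun j => by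
    rw [hy_eq]; exact (hxbar j).rescale (hc_le j) (hmass_lt j)
  have hclose : ∀ m, |purePay (u i) y i m - purePay (u i) xbar i m| ≤ α * ε := fun m =>
    calc _ ≤ ∑ j, tvDist (y j) (xbar j) :=
          abs_purePay_sub_le_sum_tvDist _ (hu i) hxbar hy_dist i m
      _ ≤ ∑ _j : Fin n, α * ε / n := sum_le_sum fun j _ => by
        rw [hy_eq]
        exact (tvDist_rescale_le (hxbar j) (hc_nonneg j) (hc_le j) (hmass_lt j)).trans (hmass j)
      _ = α * ε := by
        rw [sum_const, card_univ, Fintype.card_fin, nsmul_eq_mul]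
        field_simp
  have hk := abs_le.mp (hclose k)
  have hℓ := abs_le.mp (hclose ℓ)
  linarith

theorem truncated_gap_transfer {n α : ℕ} (hn : 0 < n) (hα : 0 < α)
    (ε : ℝ) (hε : 0 < ε) (hαεn : (α : ℝ) * ε / n < 1)
    (u : Fin n → (Fin n → Fin α) → ℝ)
    (hu : ∀ i a, u i a ∈ Set.Icc (0:ℝ) 1)
    (xbar : Fin n → Fin α → ℝ) (hxbar : ∀ i, IsDist α (xbar i))
    (c : Fin n → Fin α → ℝ)
    (hc : ∀ i k, c i k = if xbar i k ≤ ε / n then xbar i k else 0)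
    (y : Fin n → Fin α → ℝ)
    (hy : ∀ i k, y i k = (xbar i k - c i k) / (1 - ∑ j, c i j))
    (i : Fin n) (ℓ k : Fin α) (hpos : 0 < y i ℓ)
    (hgap : purePay (u i) y i ℓ + 4 * α * ε < purePay (u i) y i k) :
    purePay (u i) xbar i ℓ + 2 * α * ε < purePay (u i) xbar i k :=
  truncated_gap_transfer_general hn ε hε hαεn u hu xbar hxbar c hc y hy i ℓ k hgap
end
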